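/- arXiv:0705.0188 — 4 statements merged into one kernel-verified Lean document; each statement's English description precedes it below -/
import Mathlib

section
/- Along any geodesic γ(t) = (x(t), y(t), z(t)) on the ellipsoid x²/a + y²/b + z²/c = 1 in Minkowski 3-space (i.e., a curve on the ellipsoid with γ''(t) = λ(t)·(x/a, y/b, −z/c)), the Joachimsthal function J = (x²/a² + y²/b² − z²/c²)·(u²/a + v²/b + w²/c), where (u,v,w) = γ'(t), is constant in t. -/
/-!
Work on a central quadric `∑ dᵢ xᵢ² = C` with `xᵢ' = uᵢ` and `uᵢ' = λ eᵢ dᵢ xᵢ`, and put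
`P = ∑ eᵢ dᵢ² xᵢ²`, `Q = ∑ dᵢ uᵢ²`, `D = ∑ eᵢ dᵢ² xᵢ uᵢ`. Then `P' = 2D` and `Q' = 2λD`, so
`(PQ)' = 2D (Q + λP)`. Differentiating the constraint gives `∑ dᵢ xᵢ uᵢ = 0`, and differentiating
this once more gives `Q + λP = 0`. The Minkowski ellipsoid is the case
`d = (1/a, 1/b, 1/c)`, `e = (1, 1, -1)`.
-/

open Finset

theorem HasDerivAt.eq_zero_of_forall_eq {f : ℝ → ℝ} {f' t C : ℝ} (hf : HasDerivAt f f' t)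
    (hC : ∀ s, f s = C) : f' = 0 := by
  obtain rfl : f = fun _ => C := funext hC
  exact hf.unique (hasDerivAt_const t C)

section

variable {ι : Type*} [Fintype ι] {e d : ι → ℝ} {x u : ι → ℝ → ℝ} {lam : ℝ → ℝ}

theorem hasDerivAt_sum_mul_sq (k : ι → ℝ) {v : ι → ℝ → ℝ} (hx : ∀ i t, HasDerivAt (x i) (v i t) t)
    (t : ℝ) :
    HasDerivAt (fun s => ∑ i, k i * x i s ^ 2) (2 * ∑ i, k i * (x i t * v i t)) t := by
  refine (HasDerivAt.fun_sum fun i _ => ((hx i t).pow 2).const_mul (k i)).congr_deriv ?_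
  rw [mul_sum]
  refine sum_congr rfl fun i _ => ?_
  push_cast
  ring

theorem sum_mul_mul_eq_zero_of_sum_mul_sq_eq {C : ℝ} (hq : ∀ t, ∑ i, d i * x i t ^ 2 = C)
    (hx : ∀ i t, HasDerivAt (x i) (u i t) t) (t : ℝ) :
    ∑ i, d i * (x i t * u i t) = 0 := by
  have := (hasDerivAt_sum_mul_sq d hx t).eq_zero_of_forall_eq hq
  linarith

theorem sum_mul_sq_add_lam_mul_eq_zero {C : ℝ} (hq : ∀ t, ∑ i, d i * x i t ^ 2 = C)
    (hx : ∀ i t, HasDerivAt (x i) (u i t) t)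
    (hu : ∀ i t, HasDerivAt (u i) (lam t * (e i * d i * x i t)) t) (t : ℝ) :
    ∑ i, d i * u i t ^ 2 + lam t * ∑ i, e i * d i ^ 2 * x i t ^ 2 = 0 := by
  have hderiv : HasDerivAt (fun s => ∑ i, d i * (x i s * u i s))
      (∑ i, d i * u i t ^ 2 + lam t * ∑ i, e i * d i ^ 2 * x i t ^ 2) t := by
    refine (HasDerivAt.fun_sum fun i _ =>
      ((hx i t).fun_mul (hu i t)).const_mul (d i)).congr_deriv ?_
    rw [mul_sum, ← sum_add_distrib]
    refine sum_congr rfl fun i _ => ?_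
    ring
  exact hderiv.eq_zero_of_forall_eq (sum_mul_mul_eq_zero_of_sum_mul_sq_eq hq hx)

theorem hasDerivAt_joachimsthal {C : ℝ} (hq : ∀ t, ∑ i, d i * x i t ^ 2 = C)
    (hx : ∀ i t, HasDerivAt (x i) (u i t) t)
    (hu : ∀ i t, HasDerivAt (u i) (lam t * (e i * d i * x i t)) t) (t : ℝ) :
    HasDerivAt (fun s => (∑ i, e i * d i ^ 2 * x i s ^ 2) * ∑ i, d i * u i s ^ 2) 0 t := by
  set D := ∑ i, e i * d i ^ 2 * (x i t * u i t)
  have hP := hasDerivAt_sum_mul_sq (fun i => e i * d i ^ 2) hx t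
  have hQ : HasDerivAt (fun s => ∑ i, d i * u i s ^ 2) (2 * (lam t * D)) t := by
    refine (hasDerivAt_sum_mul_sq d hu t).congr_deriv ?_
    simp only [D, mul_sum]
    refine sum_congr rfl fun i _ => ?_
    ring
  refine (hP.mul hQ).congr_deriv ?_
  linear_combination 2 * D * sum_mul_sq_add_lam_mul_eq_zero hq hx hu t

theorem joachimsthal_eq {C : ℝ} (hq : ∀ t, ∑ i, d i * x i t ^ 2 = C)
    (hx : ∀ i t, HasDerivAt (x i) (u i t) t)
    (hu : ∀ i t, HasDerivAt (u i) (lam t * (e i * d i * x i t)) t) (s t : ℝ) :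
    (∑ i, e i * d i ^ 2 * x i s ^ 2) * ∑ i, d i * u i s ^ 2 =
      (∑ i, e i * d i ^ 2 * x i t ^ 2) * ∑ i, d i * u i t ^ 2 :=
  is_const_of_deriv_eq_zero (fun r => (hasDerivAt_joachimsthal hq hx hu r).differentiableAt)
    (fun r => (hasDerivAt_joachimsthal hq hx hu r).deriv) s t

end

theorem stmt2_general (a b c : ℝ)
    (x y z u v w lam : ℝ → ℝ)
    (hell : ∀ t, (x t) ^ 2 / a + (y t) ^ 2 / b + (z t) ^ 2 / c = 1)
    (hx : ∀ t, HasDerivAt x (u t) t) (hy : ∀ t, HasDerivAt y (v t) t)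
    (hz : ∀ t, HasDerivAt z (w t) t)
    (hu : ∀ t, HasDerivAt u (lam t * (x t / a)) t)
    (hv : ∀ t, HasDerivAt v (lam t * (y t / b)) t)
    (hw : ∀ t, HasDerivAt w (lam t * (-(z t) / c)) t) :
    ∀ s t : ℝ,
      ((x s) ^ 2 / a ^ 2 + (y s) ^ 2 / b ^ 2 - (z s) ^ 2 / c ^ 2) *
        ((u s) ^ 2 / a + (v s) ^ 2 / b + (w s) ^ 2 / c) =
      ((x t) ^ 2 / a ^ 2 + (y t) ^ 2 / b ^ 2 - (z t) ^ 2 / c ^ 2) *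
        ((u t) ^ 2 / a + (v t) ^ 2 / b + (w t) ^ 2 / c) := by
  intro s t
  have h := joachimsthal_eq (e := ![1, 1, -1]) (d := ![a⁻¹, b⁻¹, c⁻¹]) (x := ![x, y, z])
    (u := ![u, v, w]) (lam := lam) (C := 1)
    (fun t => by simpa [Fin.sum_univ_three, div_eq_inv_mul] using hell t)
    (fun i t => by fin_cases i <;> simp [hx t, hy t, hz t])
    (fun i t => by
      fin_cases i
      · simpa [div_eq_inv_mul] using hu t
      · simpa [div_eq_inv_mul] using hv t
      · simpa [div_eq_inv_mul] using hw t) s t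
  simp only [Fin.sum_univ_three, Matrix.cons_val_zero, Matrix.cons_val_one, Matrix.cons_val_two,
    Matrix.tail_cons, Matrix.head_cons] at h
  convert h using 2 <;> ring

/-- Along any geodesic γ = (x,y,z) on the ellipsoid x²/a + y²/b + z²/c = 1 in Minkowski
3-space (γ'' = λ·(x/a, y/b, −z/c)), avoiding the degeneracy locus, the Joachimsthal
function J = (x²/a² + y²/b² − z²/c²)(u²/a + v²/b + w²/c) is constant. -/
theorem stmt2 (a b c : ℝ) (ha : 0 < a) (hb : 0 < b) (hc : 0 < c)
    (x y z u v w lam : ℝ → ℝ)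
    (hell : ∀ t, (x t) ^ 2 / a + (y t) ^ 2 / b + (z t) ^ 2 / c = 1)
    (hx : ∀ t, HasDerivAt x (u t) t) (hy : ∀ t, HasDerivAt y (v t) t)
    (hz : ∀ t, HasDerivAt z (w t) t)
    (hu : ∀ t, HasDerivAt u (lam t * (x t / a)) t)
    (hv : ∀ t, HasDerivAt v (lam t * (y t / b)) t)
    (hw : ∀ t, HasDerivAt w (lam t * (-(z t) / c)) t)
    (hnd : ∀ t, (x t) ^ 2 / a ^ 2 + (y t) ^ 2 / b ^ 2 - (z t) ^ 2 / c ^ 2 ≠ 0) :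
    ∀ s t : ℝ,
      ((x s) ^ 2 / a ^ 2 + (y s) ^ 2 / b ^ 2 - (z s) ^ 2 / c ^ 2) *
        ((u s) ^ 2 / a + (v s) ^ 2 / b + (w s) ^ 2 / c) =
      ((x t) ^ 2 / a ^ 2 + (y t) ^ 2 / b ^ 2 - (z t) ^ 2 / c ^ 2) *
        ((u t) ^ 2 / a + (v t) ^ 2 / b + (w t) ^ 2 / c) :=
  stmt2_general a b c x y z u v w lam hell hx hy hz hu hv hw
end

section
/- Let γ(t) be a unit-energy space-like geodesic on the ellipsoid x²/a + y²/b + z²/c = 1 in Minkowski 3-space (so ⟨γ', γ'⟩ = u² + v² − w² = 1 along γ), with constant Joachimsthal integral J. If γ(t) converges to a point P on the tropic (where x²/a² + y²/b² − z²/c² = 0) as t → t₀, then the rescaled velocity (ū, v̄, w̄) = μ·(u,v,w), with μ = √(x²/a² + y²/b² − z²/c²), satisfies ū² + v̄² − w̄² → 0 while ū² + v̄² + w̄² stays bounded away from 0 and ∞; i.e., the limiting direction of the geodesic at the tropic is a null direction. -/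
open Filter

/-!
Along the geodesic, `Q = x²/a² + y²/b² - z²/c²` is positive and tends to `0` at the tropic, while
the energy condition makes `μ²(u² + v² - w²) = Q`; this gives the first claim. For the second,
`u² + v² + w²` and `u²/a + v²/b + w²/c` are comparable up to the factors `min a b c` and
`max a b c`, so `μ²(u² + v² + w²) = Q (u² + v² + w²)` is pinched between multiples of the
Joachimsthal integral `J = Q (u²/a + v²/b + w²/c)`, which is positive because `Q > 0` and the
velocity is nonzero.
-/

lemma mul_div_le_of_le {m a s : ℝ} (ha : 0 < a) (hs : 0 ≤ s) (hm : m ≤ a) : m * (s / a) ≤ s :=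
  calc m * (s / a) ≤ a * (s / a) := mul_le_mul_of_nonneg_right hm (div_nonneg hs ha.le)
    _ = s := mul_div_cancel₀ s ha.ne'

lemma le_mul_div_of_le {M a s : ℝ} (ha : 0 < a) (hs : 0 ≤ s) (hM : a ≤ M) : s ≤ M * (s / a) :=
  calc s = a * (s / a) := (mul_div_cancel₀ s ha.ne').symm
    _ ≤ M * (s / a) := mul_le_mul_of_nonneg_right hM (div_nonneg hs ha.le)

section WeightedNorm

variable {a b c : ℝ} (ha : 0 < a) (hb : 0 < b) (hc : 0 < c) (u v w : ℝ)
include ha hb hc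

lemma min_mul_weighted_sum_sq_le :
    min a (min b c) * (u ^ 2 / a + v ^ 2 / b + w ^ 2 / c) ≤ u ^ 2 + v ^ 2 + w ^ 2 := by
  have hu := mul_div_le_of_le ha (sq_nonneg u) (min_le_left a (min b c))
  have hv := mul_div_le_of_le hb (sq_nonneg v) ((min_le_right a _).trans (min_le_left b c))
  have hw := mul_div_le_of_le hc (sq_nonneg w) ((min_le_right a _).trans (min_le_right b c))
  linarith

lemma sum_sq_le_max_mul_weighted :
    u ^ 2 + v ^ 2 + w ^ 2 ≤ max a (max b c) * (u ^ 2 / a + v ^ 2 / b + w ^ 2 / c) := by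
  have hu := le_mul_div_of_le ha (sq_nonneg u) (le_max_left a (max b c))
  have hv := le_mul_div_of_le hb (sq_nonneg v) ((le_max_left b c).trans (le_max_right a _))
  have hw := le_mul_div_of_le hc (sq_nonneg w) ((le_max_right b c).trans (le_max_right a _))
  linarith

lemma mul_sum_sq_bounds_of_mul_weighted_eq {Q J : ℝ} (hQ : 0 < Q)
    (hJ : Q * (u ^ 2 / a + v ^ 2 / b + w ^ 2 / c) = J) :
    min a (min b c) * J ≤ Q * (u ^ 2 + v ^ 2 + w ^ 2) ∧
      Q * (u ^ 2 + v ^ 2 + w ^ 2) ≤ max a (max b c) * J := by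
  subst hJ
  constructor
  · rw [mul_left_comm]
    exact mul_le_mul_of_nonneg_left (min_mul_weighted_sum_sq_le ha hb hc u v w) hQ.le
  · rw [mul_left_comm]
    exact mul_le_mul_of_nonneg_left (sum_sq_le_max_mul_weighted ha hb hc u v w) hQ.le

end WeightedNorm

theorem stmt4_general (a b c J0 t₀ x₀ y₀ z₀ : ℝ) (ha : 0 < a) (hb : 0 < b) (hc : 0 < c)
    (x y z u v w : ℝ → ℝ)
    (henergy : ∀ t, (u t) ^ 2 + (v t) ^ 2 - (w t) ^ 2 = 1)
    (hbelt : ∀ t, 0 < (x t) ^ 2 / a ^ 2 + (y t) ^ 2 / b ^ 2 - (z t) ^ 2 / c ^ 2)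
    (hJ : ∀ t, ((x t) ^ 2 / a ^ 2 + (y t) ^ 2 / b ^ 2 - (z t) ^ 2 / c ^ 2) *
        ((u t) ^ 2 / a + (v t) ^ 2 / b + (w t) ^ 2 / c) = J0)
    (hlim : Tendsto (fun t => (x t, y t, z t)) (nhdsWithin t₀ {t₀}ᶜ) (nhds (x₀, y₀, z₀)))
    (htrop : x₀ ^ 2 / a ^ 2 + y₀ ^ 2 / b ^ 2 - z₀ ^ 2 / c ^ 2 = 0) :
    Tendsto (fun t =>
        (Real.sqrt ((x t) ^ 2 / a ^ 2 + (y t) ^ 2 / b ^ 2 - (z t) ^ 2 / c ^ 2)) ^ 2 *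
          ((u t) ^ 2 + (v t) ^ 2 - (w t) ^ 2)) (nhdsWithin t₀ {t₀}ᶜ) (nhds 0) ∧
    ∃ m M : ℝ, 0 < m ∧
      ∀ᶠ t in nhdsWithin t₀ {t₀}ᶜ,
        m ≤ (Real.sqrt ((x t) ^ 2 / a ^ 2 + (y t) ^ 2 / b ^ 2 - (z t) ^ 2 / c ^ 2)) ^ 2 *
              ((u t) ^ 2 + (v t) ^ 2 + (w t) ^ 2) ∧
          (Real.sqrt ((x t) ^ 2 / a ^ 2 + (y t) ^ 2 / b ^ 2 - (z t) ^ 2 / c ^ 2)) ^ 2 *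
              ((u t) ^ 2 + (v t) ^ 2 + (w t) ^ 2) ≤ M := by
  simp only [fun t => Real.sq_sqrt (hbelt t).le]
  have hbounds t := mul_sum_sq_bounds_of_mul_weighted_eq ha hb hc (u t) (v t) (w t) (hbelt t) (hJ t)
  have hJ0 : 0 < J0 := by
    have hS : 0 < (u t₀) ^ 2 + (v t₀) ^ 2 + (w t₀) ^ 2 := by nlinarith [henergy t₀, sq_nonneg (w t₀)]
    exact pos_of_mul_pos_right ((mul_pos (hbelt t₀) hS).trans_le (hbounds t₀).2)
      (lt_max_of_lt_left ha).le
  constructor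
  · have hcont : Continuous fun p : ℝ × ℝ × ℝ =>
        p.1 ^ 2 / a ^ 2 + p.2.1 ^ 2 / b ^ 2 - p.2.2 ^ 2 / c ^ 2 := by fun_prop
    simpa [Function.comp_def, henergy, htrop] using (hcont.tendsto (x₀, y₀, z₀)).comp hlim
  · exact ⟨_, _, mul_pos (lt_min ha (lt_min hb hc)) hJ0, Eventually.of_forall hbounds⟩

/-- A unit-energy space-like geodesic on the ellipsoid in Minkowski 3-space, with constant
Joachimsthal integral J₀ ≠ 0, approaching a point of a tropic: the rescaled velocity
(ū,v̄,w̄) = μ·(u,v,w), μ = √(x²/a²+y²/b²−z²/c²), satisfies ū²+v̄²−w̄² → 0 while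
ū²+v̄²+w̄² stays bounded away from 0 and ∞: the limiting direction is null. -/
theorem stmt4 (a b c J0 t₀ x₀ y₀ z₀ : ℝ) (ha : 0 < a) (hb : 0 < b) (hc : 0 < c)
    (hJ0 : J0 ≠ 0)
    (x y z u v w : ℝ → ℝ)
    (hell : ∀ t, (x t) ^ 2 / a + (y t) ^ 2 / b + (z t) ^ 2 / c = 1)
    (henergy : ∀ t, (u t) ^ 2 + (v t) ^ 2 - (w t) ^ 2 = 1)
    (hbelt : ∀ t, 0 < (x t) ^ 2 / a ^ 2 + (y t) ^ 2 / b ^ 2 - (z t) ^ 2 / c ^ 2)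
    (hJ : ∀ t, ((x t) ^ 2 / a ^ 2 + (y t) ^ 2 / b ^ 2 - (z t) ^ 2 / c ^ 2) *
        ((u t) ^ 2 / a + (v t) ^ 2 / b + (w t) ^ 2 / c) = J0)
    (hlim : Tendsto (fun t => (x t, y t, z t)) (nhdsWithin t₀ {t₀}ᶜ) (nhds (x₀, y₀, z₀)))
    (htrop : x₀ ^ 2 / a ^ 2 + y₀ ^ 2 / b ^ 2 - z₀ ^ 2 / c ^ 2 = 0)
    (hP : x₀ ^ 2 / a + y₀ ^ 2 / b + z₀ ^ 2 / c = 1) :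
    Tendsto (fun t =>
        (Real.sqrt ((x t) ^ 2 / a ^ 2 + (y t) ^ 2 / b ^ 2 - (z t) ^ 2 / c ^ 2)) ^ 2 *
          ((u t) ^ 2 + (v t) ^ 2 - (w t) ^ 2)) (nhdsWithin t₀ {t₀}ᶜ) (nhds 0) ∧
    ∃ m M : ℝ, 0 < m ∧
      ∀ᶠ t in nhdsWithin t₀ {t₀}ᶜ,
        m ≤ (Real.sqrt ((x t) ^ 2 / a ^ 2 + (y t) ^ 2 / b ^ 2 - (z t) ^ 2 / c ^ 2)) ^ 2 *
              ((u t) ^ 2 + (v t) ^ 2 + (w t) ^ 2) ∧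
          (Real.sqrt ((x t) ^ 2 / a ^ 2 + (y t) ^ 2 / b ^ 2 - (z t) ^ 2 / c ^ 2)) ^ 2 *
              ((u t) ^ 2 + (v t) ^ 2 + (w t) ^ 2) ≤ M :=
  stmt4_general a b c J0 t₀ x₀ y₀ z₀ ha hb hc x y z u v w henergy hbelt hJ hlim htrop
end

section
/- The Gauss curvature K of the ellipsoid x²/a + y²/b + z²/c = 1 in Minkowski 3-space (with metric dx² + dy² − dz²), at points where the induced metric is nondegenerate, is given by 1/K = −abc·(x²/a² + y²/b² − z²/c²)²; in particular K < 0 everywhere off the tropics. -/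
/-!
Write `N` for the linear map `Nvec a b c` and `s = |f|^(-1/2)`, so that `ν = s • N`. Since `N`
is linear, `Dν(v) = s • N v + (Ds v) • N p`, and the `N p`-components drop out of a determinant
whose last row is `N p`; what remains is `s² · det N · det[v, w, p] = -det[v, w, p] / (abc |f|)`.
Tangent vectors are Euclidean-orthogonal to `G = (x/a, y/b, z/c)`, so `v × w` is parallel to `G`
and `det[v, w, X]` is proportional to `G · X`. As `G · p = 1` on the ellipsoid and
`G · N p = f`, this gives `det[v, w, N p] = f · det[v, w, p]`, and the two sides agree.
-/

/-- Minkowski form on ℝ³ = (Fin 3 → ℝ). -/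
def mink (p q : Fin 3 → ℝ) : ℝ := p 0 * q 0 + p 1 * q 1 - p 2 * q 2

/-- Minkowski normal N(x,y,z) = (x/a, y/b, −z/c) to the ellipsoid. -/
noncomputable def Nvec (a b c : ℝ) (q : Fin 3 → ℝ) : Fin 3 → ℝ :=
  ![q 0 / a, q 1 / b, -(q 2) / c]

/-- f = ⟨N,N⟩ = x²/a² + y²/b² − z²/c². -/
noncomputable def fdeg (a b c : ℝ) (q : Fin 3 → ℝ) : ℝ :=
  (q 0 / a) ^ 2 + (q 1 / b) ^ 2 - (q 2 / c) ^ 2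

/-- Unit normal field ν = N/√|f|. -/
noncomputable def nuField (a b c : ℝ) (q : Fin 3 → ℝ) : Fin 3 → ℝ :=
  (Real.sqrt |fdeg a b c q|)⁻¹ • Nvec a b c q

open Matrix

section Determinants

variable {R : Type*} [CommRing R]

lemma det_mul_dotProduct_comm_of_dotProduct_eq_zero {g v w : Fin 3 → R} (hv : g ⬝ᵥ v = 0)
    (hw : g ⬝ᵥ w = 0) (x y : Fin 3 → R) :
    det (of ![v, w, x]) * (g ⬝ᵥ y) = det (of ![v, w, y]) * (g ⬝ᵥ x) := by
  have hparallel : g ⨯₃ (v ⨯₃ w) = 0 := by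
    rw [cross_cross_eq_smul_sub_smul', hw, dotProduct_comm, hv, zero_smul, zero_smul, sub_zero]
  have htriple (z : Fin 3 → R) : det (of ![v, w, z]) = v ⨯₃ w ⬝ᵥ z := by
    rw [dotProduct_comm, triple_product_permutation, triple_product_eq_det]
    rfl
  have hquad := cross_dot_cross g (v ⨯₃ w) y x
  rw [hparallel, zero_dotProduct] at hquad
  rw [htriple, htriple]
  linear_combination -hquad

lemma det_of_neg_smul_add_smul_last (x y n : Fin 3 → R) (s α β : R) :
    det (of ![-(s • x + α • n), -(s • y + β • n), n]) = s ^ 2 * det (of ![x, y, n]) := by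
  simp [det_fin_three]
  ring

lemma det_of_mul_rows (d x y z : Fin 3 → R) :
    det (of ![d * x, d * y, d * z]) = (d 0 * d 1 * d 2) * det (of ![x, y, z]) := by
  simp [det_fin_three]
  ring

end Determinants

lemma mink_eq_dotProduct (u n : Fin 3 → ℝ) : mink u n = (![1, 1, -1] * n) ⬝ᵥ u := by
  simp [mink, dotProduct, Fin.sum_univ_three]
  ring

lemma det_mul_mink_comm_of_mink_eq_zero {n v w : Fin 3 → ℝ} (hv : mink v n = 0)
    (hw : mink w n = 0) (x y : Fin 3 → ℝ) :
    det (of ![v, w, x]) * mink y n = det (of ![v, w, y]) * mink x n := by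
  simp only [mink_eq_dotProduct] at *
  exact det_mul_dotProduct_comm_of_dotProduct_eq_zero hv hw x y

lemma inv_sqrt_abs_sq {f : ℝ} (hf : f ≠ 0) : (√|f|)⁻¹ ^ 2 = (if 0 < f then 1 else -1) / f := by
  rw [inv_pow, Real.sq_sqrt (abs_nonneg f)]
  split_ifs with hpos
  · rw [abs_of_pos hpos, one_div]
  · rw [abs_of_neg (lt_of_le_of_ne (not_lt.mp hpos) hf), neg_div, one_div, inv_neg]

section Ellipsoid

variable (a b c : ℝ)

lemma Nvec_eq_mul (q : Fin 3 → ℝ) : Nvec a b c q = ![a⁻¹, b⁻¹, -c⁻¹] * q := by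
  ext i
  fin_cases i <;> simp [Nvec, div_eq_inv_mul]

lemma det_Nvec (x y z : Fin 3 → ℝ) :
    det (of ![Nvec a b c x, Nvec a b c y, Nvec a b c z]) =
      -(a * b * c)⁻¹ * det (of ![x, y, z]) := by
  simp only [Nvec_eq_mul, det_of_mul_rows]
  congr 1
  simp
  ring

lemma mink_Nvec (q : Fin 3 → ℝ) :
    mink q (Nvec a b c q) = q 0 ^ 2 / a + q 1 ^ 2 / b + q 2 ^ 2 / c := by
  simp [mink, Nvec]
  ring

lemma mink_Nvec_Nvec (q : Fin 3 → ℝ) : mink (Nvec a b c q) (Nvec a b c q) = fdeg a b c q := by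
  simp [mink, Nvec, fdeg]
  ring

lemma hasFDerivAt_Nvec (p : Fin 3 → ℝ) :
    HasFDerivAt (Nvec a b c) (![a⁻¹, b⁻¹, -c⁻¹] • ContinuousLinearMap.id ℝ (Fin 3 → ℝ)) p := by
  rw [funext (Nvec_eq_mul a b c)]
  exact (hasFDerivAt_id p).const_mul _

variable {a b c}

lemma fderiv_nuField_apply {p : Fin 3 → ℝ} (hnd : fdeg a b c p ≠ 0) (v : Fin 3 → ℝ) :
    fderiv ℝ (nuField a b c) p v =
      (√|fdeg a b c p|)⁻¹ • Nvec a b c v +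
        fderiv ℝ (fun q => (√|fdeg a b c q|)⁻¹) p v • Nvec a b c p := by
  have hf : DifferentiableAt ℝ (fdeg a b c) p := by unfold fdeg; fun_prop
  have hs : DifferentiableAt ℝ (fun q => (√|fdeg a b c q|)⁻¹) p :=
    ((hf.abs hnd).sqrt (abs_ne_zero.mpr hnd)).inv (by positivity)
  have hν : nuField a b c = (fun q => (√|fdeg a b c q|)⁻¹) • Nvec a b c := rfl
  rw [hν, (hs.hasFDerivAt.smul (hasFDerivAt_Nvec a b c p)).fderiv]
  simp [Nvec_eq_mul]

end Ellipsoid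

/-- The shape operator is `S v = -Dν(v)` on the tangent plane `{v : ⟨v, N⟩ = 0}` and
`K = ε · det S` with `ε = sign ⟨ν, ν⟩`; `det S` is read off by comparing 3×3 determinants whose
last row is the normal `N`. -/
theorem stmt13 (a b c : ℝ) (ha : 0 < a) (hb : 0 < b) (hc : 0 < c)
    (p : Fin 3 → ℝ)
    (hp : (p 0) ^ 2 / a + (p 1) ^ 2 / b + (p 2) ^ 2 / c = 1)
    (hnd : fdeg a b c p ≠ 0) :
    (-(1 / (a * b * c * (fdeg a b c p) ^ 2)) : ℝ) < 0 ∧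
    ∀ v w : Fin 3 → ℝ, mink v (Nvec a b c p) = 0 → mink w (Nvec a b c p) = 0 →
      Matrix.det (Matrix.of
          ![-(fderiv ℝ (nuField a b c) p v), -(fderiv ℝ (nuField a b c) p w),
            Nvec a b c p]) =
        ((if 0 < fdeg a b c p then (1 : ℝ) else -1) *
            (-(1 / (a * b * c * (fdeg a b c p) ^ 2)))) *
          Matrix.det (Matrix.of ![v, w, Nvec a b c p]) := by
  refine ⟨neg_neg_of_pos (by positivity), fun v w hv hw => ?_⟩
  have htangent := det_mul_mink_comm_of_mink_eq_zero hv hw (Nvec a b c p) p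
  rw [mink_Nvec, hp, mul_one, mink_Nvec_Nvec] at htangent
  rw [fderiv_nuField_apply hnd, fderiv_nuField_apply hnd, det_of_neg_smul_add_smul_last,
    det_Nvec, inv_sqrt_abs_sq hnd, htangent]
  field_simp
end

section
/- For the pseudo-confocal family of quadrics x²/(a+λ) + y²/(b+λ) + z²/(c−λ) = 1 in ℝ³ with a > b > 0 and c > 0, and for a generic point Q = (x₀,y₀,z₀) with x₀y₀z₀ ≠ 0, the values of λ for which the quadric passes through Q are the roots of a cubic polynomial in λ; this cubic has either three real roots or one real root, and if λ₁ ≠ λ₂ are two such values then the corresponding quadrics are orthogonal at Q with respect to the Minkowski form: the Minkowski inner product of their normals N_λ(Q) = (x₀/(a+λ), y₀/(b+λ), −z₀/(c−λ)) vanishes. -/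
/-!
Clearing the denominators of x₀²/(a+λ) + y₀²/(b+λ) + z₀²/(c−λ) = 1 gives a monic cubic in λ.
At λ = −a it equals x₀²(b−a)(c+a) ≤ 0 and at λ = −b it equals y₀²(a−b)(c+b) ≥ 0, so it has a
root in [−a, −b]. For orthogonality, the partial fractions
1/((a+λ₁)(a+λ₂)) = (1/(a+λ₂) − 1/(a+λ₁))/(λ₁−λ₂) and
1/((c−λ₁)(c−λ₂)) = −(1/(c−λ₂) − 1/(c−λ₁))/(λ₁−λ₂) turn (λ₁−λ₂)⟨N_{λ₁}, N_{λ₂}⟩ into the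
difference of the two quadric equations evaluated at Q, which is 1 − 1 = 0.
-/

open Set

theorem div_add_div_add_div_eq_one_iff {K : Type*} [Field K] {x y z α β γ : K}
    (hα : α ≠ 0) (hβ : β ≠ 0) (hγ : γ ≠ 0) :
    x / α + y / β + z / γ = 1 ↔ x * β * γ + y * α * γ + z * α * β - α * β * γ = 0 := by
  rw [div_add_div _ _ hα hβ, div_add_div _ _ (mul_ne_zero hα hβ) hγ,
    div_eq_one_iff_eq (mul_ne_zero (mul_ne_zero hα hβ) hγ), ← sub_eq_zero]
  constructor <;> intro h <;> linear_combination h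

def pseudoConfocalCubic (a b c x y z l : ℝ) : ℝ :=
  x ^ 2 * (b + l) * (c - l) + y ^ 2 * (a + l) * (c - l) +
    z ^ 2 * (a + l) * (b + l) - (a + l) * (b + l) * (c - l)

theorem exists_pseudoConfocalCubic_eq_zero_mem_Icc {a b c : ℝ} (x y z : ℝ)
    (hba : b ≤ a) (hbc : 0 ≤ b + c) :
    ∃ r ∈ Icc (-a) (-b), pseudoConfocalCubic a b c x y z r = 0 := by
  have h_neg_a : pseudoConfocalCubic a b c x y z (-a) ≤ 0 := by
    have : x ^ 2 * (b - a) * (c + a) ≤ 0 :=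
      mul_nonpos_of_nonpos_of_nonneg
        (mul_nonpos_of_nonneg_of_nonpos (sq_nonneg x) (by linarith)) (by linarith)
    simp only [pseudoConfocalCubic]
    linear_combination this
  have h_neg_b : 0 ≤ pseudoConfocalCubic a b c x y z (-b) := by
    have : 0 ≤ y ^ 2 * (a - b) * (c + b) :=
      mul_nonneg (mul_nonneg (sq_nonneg y) (by linarith)) (by linarith)
    simp only [pseudoConfocalCubic]
    linear_combination this
  have hcont : ContinuousOn (pseudoConfocalCubic a b c x y z) (Icc (-a) (-b)) := by
    unfold pseudoConfocalCubic
    fun_prop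
  exact intermediate_value_Icc (neg_le_neg hba) hcont ⟨h_neg_a, h_neg_b⟩

theorem sub_mul_minkowski_inner_normals {a b c x y z l₁ l₂ : ℝ}
    (ha₁ : a + l₁ ≠ 0) (hb₁ : b + l₁ ≠ 0) (hc₁ : c - l₁ ≠ 0)
    (ha₂ : a + l₂ ≠ 0) (hb₂ : b + l₂ ≠ 0) (hc₂ : c - l₂ ≠ 0) :
    (l₁ - l₂) * ((x / (a + l₁)) * (x / (a + l₂)) + (y / (b + l₁)) * (y / (b + l₂)) -
        (-z / (c - l₁)) * (-z / (c - l₂))) =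
      (x ^ 2 / (a + l₂) + y ^ 2 / (b + l₂) + z ^ 2 / (c - l₂)) -
        (x ^ 2 / (a + l₁) + y ^ 2 / (b + l₁) + z ^ 2 / (c - l₁)) := by
  field_simp
  ring

theorem stmt18_general (a b c x₀ y₀ z₀ : ℝ) (hab : a > b) (hb : 0 < b) (hc : 0 < c) :
    (∀ l : ℝ, a + l ≠ 0 → b + l ≠ 0 → c - l ≠ 0 →
      (x₀ ^ 2 / (a + l) + y₀ ^ 2 / (b + l) + z₀ ^ 2 / (c - l) = 1 ↔
        x₀ ^ 2 * (b + l) * (c - l) + y₀ ^ 2 * (a + l) * (c - l) +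
          z₀ ^ 2 * (a + l) * (b + l) - (a + l) * (b + l) * (c - l) = 0)) ∧
    (∃ r : ℝ,
      x₀ ^ 2 * (b + r) * (c - r) + y₀ ^ 2 * (a + r) * (c - r) +
        z₀ ^ 2 * (a + r) * (b + r) - (a + r) * (b + r) * (c - r) = 0) ∧
    (∀ l₁ l₂ : ℝ, l₁ ≠ l₂ →
      a + l₁ ≠ 0 → b + l₁ ≠ 0 → c - l₁ ≠ 0 →
      a + l₂ ≠ 0 → b + l₂ ≠ 0 → c - l₂ ≠ 0 →
      x₀ ^ 2 / (a + l₁) + y₀ ^ 2 / (b + l₁) + z₀ ^ 2 / (c - l₁) = 1 →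
      x₀ ^ 2 / (a + l₂) + y₀ ^ 2 / (b + l₂) + z₀ ^ 2 / (c - l₂) = 1 →
      (x₀ / (a + l₁)) * (x₀ / (a + l₂)) + (y₀ / (b + l₁)) * (y₀ / (b + l₂)) -
        (-(z₀) / (c - l₁)) * (-(z₀) / (c - l₂)) = 0) := by
  refine ⟨fun l ha hb hc => div_add_div_add_div_eq_one_iff ha hb hc, ?_, ?_⟩
  · obtain ⟨r, -, hr⟩ :=
      exists_pseudoConfocalCubic_eq_zero_mem_Icc x₀ y₀ z₀ hab.le (by linarith)
    exact ⟨r, hr⟩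
  · intro l₁ l₂ hne ha₁ hb₁ hc₁ ha₂ hb₂ hc₂ hQ₁ hQ₂
    have h := sub_mul_minkowski_inner_normals (x := x₀) (y := y₀) (z := z₀)
      ha₁ hb₁ hc₁ ha₂ hb₂ hc₂
    rw [hQ₁, hQ₂, sub_self] at h
    exact (mul_eq_zero.mp h).resolve_left (sub_ne_zero.mpr hne)

/-- For the pseudo-confocal family x²/(a+λ) + y²/(b+λ) + z²/(c−λ) = 1 and a generic point
Q = (x₀,y₀,z₀) with x₀y₀z₀ ≠ 0: the parameters λ of quadrics through Q are the roots of a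
cubic polynomial; this cubic has at least one real root; and two quadrics through Q with
distinct parameters are Minkowski-orthogonal at Q:
⟨N_{λ₁}(Q), N_{λ₂}(Q)⟩ = 0 for N_λ(Q) = (x₀/(a+λ), y₀/(b+λ), −z₀/(c−λ)). -/
theorem stmt18 (a b c x₀ y₀ z₀ : ℝ) (hab : a > b) (hb : 0 < b) (hc : 0 < c)
    (hx : x₀ ≠ 0) (hy : y₀ ≠ 0) (hz : z₀ ≠ 0) :
    (∀ l : ℝ, a + l ≠ 0 → b + l ≠ 0 → c - l ≠ 0 →
      (x₀ ^ 2 / (a + l) + y₀ ^ 2 / (b + l) + z₀ ^ 2 / (c - l) = 1 ↔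
        x₀ ^ 2 * (b + l) * (c - l) + y₀ ^ 2 * (a + l) * (c - l) +
          z₀ ^ 2 * (a + l) * (b + l) - (a + l) * (b + l) * (c - l) = 0)) ∧
    (∃ r : ℝ,
      x₀ ^ 2 * (b + r) * (c - r) + y₀ ^ 2 * (a + r) * (c - r) +
        z₀ ^ 2 * (a + r) * (b + r) - (a + r) * (b + r) * (c - r) = 0) ∧
    (∀ l₁ l₂ : ℝ, l₁ ≠ l₂ →
      a + l₁ ≠ 0 → b + l₁ ≠ 0 → c - l₁ ≠ 0 →
      a + l₂ ≠ 0 → b + l₂ ≠ 0 → c - l₂ ≠ 0 →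
      x₀ ^ 2 / (a + l₁) + y₀ ^ 2 / (b + l₁) + z₀ ^ 2 / (c - l₁) = 1 →
      x₀ ^ 2 / (a + l₂) + y₀ ^ 2 / (b + l₂) + z₀ ^ 2 / (c - l₂) = 1 →
      (x₀ / (a + l₁)) * (x₀ / (a + l₂)) + (y₀ / (b + l₁)) * (y₀ / (b + l₂)) -
        (-(z₀) / (c - l₁)) * (-(z₀) / (c - l₂)) = 0) :=
  stmt18_general a b c x₀ y₀ z₀ hab hb hc
end
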